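/- arXiv:1702.01362 — 5 statements merged into one kernel-verified Lean document; each statement's English description precedes it below -/
import Mathlib

section
/- Let p₁,p₂>0 with p₁+p₂=1 and h₁,h₂>0 with h₁≠h₂. Then the function t ↦ (p₁h₁ + p₂h₂ + h₁h₂t)/(1 + (p₁h₂ + p₂h₁)t) is strictly decreasing on [0,∞). -/
/-!
A fractional linear map `t ↦ (a + b t) / (1 + c t)` with `c ≥ 0` is strictly decreasing on
`[0, ∞)` as soon as its determinant `b - a c` is negative. For the local discount rate of the
mixture, `a c - b = (p₁h₁ + p₂h₂)(p₁h₂ + p₂h₁) - h₁h₂ = p₁p₂(h₁ - h₂)²`, which is positive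
when `h₁ ≠ h₂`.
-/

open Set

theorem strictAntiOn_div_one_add_mul {𝕜 : Type*} [Field 𝕜] [LinearOrder 𝕜]
    [IsStrictOrderedRing 𝕜] {a b c : 𝕜} (hc : 0 ≤ c) (hdet : b < a * c) :
    StrictAntiOn (fun t => (a + b * t) / (1 + c * t)) (Ici 0) := by
  intro x hx y hy hxy
  have hdx : 0 < 1 + c * x := by have := mul_nonneg hc hx; linarith
  have hdy : 0 < 1 + c * y := by have := mul_nonneg hc hy; linarith
  rw [div_lt_div_iff₀ hdy hdx]
  nlinarith [mul_pos (sub_pos.2 hdet) (sub_pos.2 hxy)]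

theorem mixture_rate_det {R : Type*} [CommRing R] {p₁ p₂ h₁ h₂ : R} (hps : p₁ + p₂ = 1) :
    (p₁ * h₁ + p₂ * h₂) * (p₁ * h₂ + p₂ * h₁) - h₁ * h₂ = p₁ * p₂ * (h₁ - h₂) ^ 2 := by
  linear_combination h₁ * h₂ * (p₁ + p₂ + 1) * hps

theorem stmt_1 (p₁ p₂ h₁ h₂ : ℝ) (hp₁ : 0 < p₁) (hp₂ : 0 < p₂)
    (hps : p₁ + p₂ = 1) (hh₁ : 0 < h₁) (hh₂ : 0 < h₂) (hne : h₁ ≠ h₂) :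
    StrictAntiOn (fun t : ℝ =>
      (p₁ * h₁ + p₂ * h₂ + h₁ * h₂ * t) / (1 + (p₁ * h₂ + p₂ * h₁) * t))
      (Set.Ici 0) := by
  have hgap : 0 < p₁ * p₂ * (h₁ - h₂) ^ 2 :=
    mul_pos (mul_pos hp₁ hp₂) (sq_pos_of_ne_zero (sub_ne_zero.2 hne))
  refine strictAntiOn_div_one_add_mul (by positivity) ?_
  linarith [mixture_rate_det (h₁ := h₁) (h₂ := h₂) hps]
end

section
/- Let n ≥ 1, p₁,…,pₙ > 0 with Σ pᵢ = 1, and h₁,…,hₙ > 0. Define D(t) = Σᵢ pᵢ/(1+hᵢt) and h(t) = (1/D(t) − 1)/t for t > 0. Then h(t) tends to the weighted harmonic mean H = (Σᵢ pᵢ/hᵢ)⁻¹ as t → ∞. -/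
open Filter Topology

/-- `(1 / D t - 1) / t = (t * D t)⁻¹ - t⁻¹` holds for every `t`, junk values at `0` included. -/
theorem tendsto_one_div_sub_one_div_of_tendsto_mul {D : ℝ → ℝ} {S : ℝ} (hS : S ≠ 0)
    (hD : Tendsto (fun t => t * D t) atTop (𝓝 S)) :
    Tendsto (fun t => (1 / D t - 1) / t) atTop (𝓝 S⁻¹) := by
  have hlim : Tendsto (fun t => (t * D t)⁻¹ - t⁻¹) atTop (𝓝 (S⁻¹ - 0)) :=
    (hD.inv₀ hS).sub tendsto_inv_atTop_zero
  rw [sub_zero] at hlim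
  refine hlim.congr fun t => ?_
  ring

theorem tendsto_mul_div_one_add_mul (a : ℝ) {b : ℝ} (hb : b ≠ 0) :
    Tendsto (fun t => t * (a / (1 + b * t))) atTop (𝓝 (a / b)) := by
  have hlim : Tendsto (fun t : ℝ => a / (t⁻¹ + b)) atTop (𝓝 (a / (0 + b))) :=
    tendsto_const_nhds.div (tendsto_inv_atTop_zero.add tendsto_const_nhds) (by simpa using hb)
  rw [zero_add] at hlim
  refine hlim.congr' ?_
  filter_upwards [eventually_ne_atTop 0] with t ht
  rw [mul_div_assoc', show t⁻¹ + b = (1 + b * t) / t by field_simp, div_div_eq_mul_div,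
    mul_comm]

theorem tendsto_mul_sum_div_one_add_mul {ι : Type*} [Fintype ι] (p h : ι → ℝ)
    (hh : ∀ i, h i ≠ 0) :
    Tendsto (fun t => t * ∑ i, p i / (1 + h i * t)) atTop (𝓝 (∑ i, p i / h i)) := by
  simp only [Finset.mul_sum]
  exact tendsto_finsetSum _ fun i _ => tendsto_mul_div_one_add_mul (p i) (hh i)

theorem stmt_4_general (n : ℕ) (hn : 1 ≤ n) (p h : Fin n → ℝ)
    (hp : ∀ i, 0 < p i) (hh : ∀ i, 0 < h i) :
    Filter.Tendsto (fun t : ℝ => (1 / (∑ i, p i / (1 + h i * t)) - 1) / t)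
      Filter.atTop (nhds (∑ i, p i / h i)⁻¹) := by
  have : Nonempty (Fin n) := Fin.pos_iff_nonempty.mp hn
  have hS : 0 < ∑ i, p i / h i :=
    Finset.sum_pos (fun i _ => div_pos (hp i) (hh i)) Finset.univ_nonempty
  exact tendsto_one_div_sub_one_div_of_tendsto_mul hS.ne'
    (tendsto_mul_sum_div_one_add_mul p h fun i => (hh i).ne')

theorem stmt_4 (n : ℕ) (hn : 1 ≤ n) (p h : Fin n → ℝ)
    (hp : ∀ i, 0 < p i) (hps : ∑ i, p i = 1) (hh : ∀ i, 0 < h i) :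
    Filter.Tendsto (fun t : ℝ => (1 / (∑ i, p i / (1 + h i * t)) - 1) / t)
      Filter.atTop (nhds (∑ i, p i / h i)⁻¹) :=
  stmt_4_general n hn p h hp hh
end

section
/- Let p₁,…,pₙ > 0 with Σ pᵢ = 1 and let r₁ < r₂ < … < rₙ be positive reals. Define D(t) = Σᵢ pᵢ e^{−rᵢt} and the local discount rate r(t) = −D'(t)/D(t). Then r(t) → r₁ as t → ∞. -/
/-!
Multiplying numerator and denominator of `-D'(t) / D(t)` by `exp (r₀ t)` turns both into
finite sums of terms `c i * exp (-(rᵢ - r₀) t)`; all of them decay except the one with the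
smallest rate, so the quotient tends to `p₀ r₀ / p₀ = r₀`.
-/

open Filter Real Topology

section ExponentialMixture

variable {ι : Type*} [Fintype ι]

theorem hasDerivAt_sum_mul_exp (c r : ι → ℝ) (t : ℝ) :
    HasDerivAt (fun s => ∑ i, c i * exp (-(r i) * s))
      (-∑ i, c i * r i * exp (-(r i) * t)) t := by
  rw [← Finset.sum_neg_distrib]
  refine HasDerivAt.fun_sum fun i _ => ?_
  exact ((((hasDerivAt_id' t).const_mul (-(r i))).exp).const_mul (c i)).congr_deriv (by ring)

theorem sum_mul_exp_mul_exp (c r : ι → ℝ) (ρ t : ℝ) :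
    (∑ i, c i * exp (-(r i) * t)) * exp (ρ * t) = ∑ i, c i * exp (-(r i - ρ) * t) := by
  rw [Finset.sum_mul]
  refine Finset.sum_congr rfl fun i _ => ?_
  rw [mul_assoc, ← exp_add]
  congr 2
  ring

theorem tendsto_sum_mul_exp_sub_atTop (c r : ι → ℝ) {i₀ : ι} (hmin : ∀ i ≠ i₀, r i₀ < r i) :
    Tendsto (fun t => ∑ i, c i * exp (-(r i - r i₀) * t)) atTop (𝓝 (c i₀)) := by
  classical
  rw [← Fintype.sum_ite_eq' i₀ c]
  refine tendsto_finsetSum _ fun i _ => ?_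
  split_ifs with hi
  · subst hi
    simp
  · have hdecay : Tendsto (fun t => exp (-(r i - r i₀) * t)) atTop (𝓝 0) :=
      tendsto_exp_atBot.comp
        (tendsto_id.const_mul_atTop_of_neg (by linarith [hmin i hi]))
    simpa using hdecay.const_mul (c i)

theorem tendsto_sum_mul_exp_div_sum_mul_exp {c r : ι → ℝ} {i₀ : ι} (hc : c i₀ ≠ 0)
    (hmin : ∀ i ≠ i₀, r i₀ < r i) :
    Tendsto (fun t => (∑ i, c i * r i * exp (-(r i) * t)) / ∑ i, c i * exp (-(r i) * t))
      atTop (𝓝 (r i₀)) := by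
  have hlim := (tendsto_sum_mul_exp_sub_atTop (fun i => c i * r i) r hmin).div
    (tendsto_sum_mul_exp_sub_atTop c r hmin) hc
  rw [mul_div_cancel_left₀ _ hc] at hlim
  refine hlim.congr fun t => ?_
  rw [Pi.div_apply, ← sum_mul_exp_mul_exp, ← sum_mul_exp_mul_exp,
    mul_div_mul_right _ _ (exp_ne_zero _)]

end ExponentialMixture

theorem stmt_6_general (n : ℕ) (p r : Fin (n + 1) → ℝ)
    (hp : ∀ i, 0 < p i)
    (hmono : StrictMono r) :
    Filter.Tendsto
      (fun t : ℝ =>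
        -(deriv (fun s : ℝ => ∑ i, p i * Real.exp (-(r i) * s)) t)
          / (∑ i, p i * Real.exp (-(r i) * t)))
      Filter.atTop (nhds (r 0)) := by
  simp only [(hasDerivAt_sum_mul_exp p r _).deriv, neg_neg]
  exact tendsto_sum_mul_exp_div_sum_mul_exp (hp 0).ne'
    fun i hi => hmono (Fin.pos_iff_ne_zero.mpr hi)

theorem stmt_6 (n : ℕ) (p r : Fin (n + 1) → ℝ)
    (hp : ∀ i, 0 < p i) (hps : ∑ i, p i = 1) (hr : ∀ i, 0 < r i)
    (hmono : StrictMono r) :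
    Filter.Tendsto
      (fun t : ℝ =>
        -(deriv (fun s : ℝ => ∑ i, p i * Real.exp (-(r i) * s)) t)
          / (∑ i, p i * Real.exp (-(r i) * t)))
      Filter.atTop (nhds (r 0)) :=
  stmt_6_general n p r hp hmono
end

section
/- Let h: (0,∞) → (0,∞) be a function such that t ↦ 1/(1+h(t)t) equals the mixture Σᵢ pᵢ/(1+hᵢt) with pᵢ>0, Σpᵢ=1, hᵢ>0. If h is constant, h(t) = c for all t>0, then n effective: all hᵢ with pᵢ>0 are equal to c. -/
/-!
Clearing denominators turns the hypothesis into `∑ pᵢ (c - hᵢ) / (1 + hᵢ t) = 0` for all `t > 0`.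
Letting `t → 0` gives `∑ pᵢ (c - hᵢ) = 0`, and letting `t → ∞` (after multiplying by `t`) gives
`∑ pᵢ (c - hᵢ) / hᵢ = 0`: `c` is both the `p`-weighted arithmetic and harmonic mean of the `hᵢ`.
Since `(c - h)² / h = c (c - h) / h - (c - h)`, the weighted sum `∑ pᵢ (c - hᵢ)² / hᵢ` of
nonnegative terms vanishes, so every `hᵢ` equals `c`.
-/

open Finset Filter Topology

lemma eq_of_continuousAt_of_forall_pos_eq {E : Type*} [TopologicalSpace E] [T2Space E]
    {f : ℝ → E} {b : E} (hf : ContinuousAt f 0) (hpos : ∀ t > 0, f t = b) : f 0 = b :=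
  tendsto_nhds_unique (hf.tendsto.mono_left nhdsWithin_le_nhds)
    (tendsto_const_nhds.congr' <|
      eventually_nhdsWithin_of_forall (s := Set.Ioi 0) fun t ht => (hpos t ht).symm)

lemma sum_div_eq_zero_of_forall_pos {ι : Type*} [Fintype ι] (w a b : ι → ℝ)
    (ha : ∀ i, a i ≠ 0) (hpos : ∀ t > 0, ∑ i, w i / (a i + b i * t) = 0) :
    ∑ i, w i / a i = 0 := by
  have hcont : ContinuousAt (fun t => ∑ i, w i / (a i + b i * t)) 0 := by
    fun_prop (disch := simp [ha])
  simpa using eq_of_continuousAt_of_forall_pos_eq hcont hpos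

lemma sum_mul_sub_div_eq_zero_of_one_div_eq_sum {K ι : Type*} [Field K] [Fintype ι]
    {p h : ι → K} {c t : K} (hps : ∑ i, p i = 1) (ht : t ≠ 0) (hct : 1 + c * t ≠ 0)
    (hht : ∀ i, 1 + h i * t ≠ 0) (hmix : 1 / (1 + c * t) = ∑ i, p i / (1 + h i * t)) :
    ∑ i, p i * (c - h i) / (1 + h i * t) = 0 := by
  have : t * ∑ i, p i * (c - h i) / (1 + h i * t) = 0 :=
    calc t * ∑ i, p i * (c - h i) / (1 + h i * t)
        = (1 + c * t) * ∑ i, p i / (1 + h i * t) - ∑ i, p i := by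
          rw [mul_sum, mul_sum, ← sum_sub_distrib]
          refine sum_congr rfl fun i _ => ?_
          rw [eq_sub_iff_add_eq, mul_div_assoc', mul_div_assoc', div_add' _ _ _ (hht i),
            div_eq_div_iff (hht i) (hht i)]
          ring
      _ = 0 := by rw [← hmix, hps, mul_one_div_cancel hct, sub_self]
  exact (mul_eq_zero.mp this).resolve_left ht

lemma eq_of_sum_mul_sub_eq_zero_of_sum_mul_sub_div_eq_zero {K ι : Type*} [Field K]
    [LinearOrder K] [IsStrictOrderedRing K] [Fintype ι] {p h : ι → K} {c : K}
    (hp : ∀ i, 0 < p i) (hh : ∀ i, 0 < h i)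
    (hmean : ∑ i, p i * (c - h i) = 0) (hharm : ∑ i, p i * (c - h i) / h i = 0) (i : ι) :
    h i = c := by
  have hvar : ∑ i, p i * (c - h i) ^ 2 / h i = 0 :=
    calc ∑ i, p i * (c - h i) ^ 2 / h i
        = c * ∑ i, p i * (c - h i) / h i - ∑ i, p i * (c - h i) := by
          rw [mul_sum, ← sum_sub_distrib]
          refine sum_congr rfl fun i _ => ?_
          field_simp [(hh i).ne']
      _ = 0 := by rw [hmean, hharm, mul_zero, sub_zero]
  have hterm := (sum_eq_zero_iff_of_nonneg fun j _ => by have := hp j; have := hh j; positivity).mp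
    hvar i (mem_univ i)
  rw [div_eq_zero_iff, mul_eq_zero, pow_eq_zero_iff two_ne_zero, sub_eq_zero] at hterm
  exact ((hterm.resolve_right (hh i).ne').resolve_left (hp i).ne').symm

lemma div_one_add_mul_inv {K : Type*} [Field K] (x y : K) {s : K} (hs : s ≠ 0) :
    x / (1 + y * s⁻¹) = s * (x / (y + s)) := by
  rw [show 1 + y * s⁻¹ = (y + s) / s by field_simp; ring, div_div_eq_mul_div]
  ring

theorem stmt_11 (n : ℕ) (p h : Fin n → ℝ)
    (hp : ∀ i, 0 < p i) (hps : ∑ i, p i = 1) (hh : ∀ i, 0 < h i)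
    (c : ℝ)
    (hconst : ∀ t : ℝ, 0 < t → 1 / (1 + c * t) = ∑ i, p i / (1 + h i * t)) :
    ∀ i, h i = c := by
  intro i
  have hht : ∀ t > 0, ∀ j, 1 + h j * t ≠ 0 := fun t ht j => by have := hh j; positivity
  have hct : ∀ t > 0, 1 + c * t ≠ 0 := fun t ht hzero => by
    have hsum : 0 < ∑ j, p j / (1 + h j * t) :=
      sum_pos (fun j _ => div_pos (hp j) (by have := hh j; positivity)) ⟨i, mem_univ i⟩
    rw [← hconst t ht, hzero, div_zero] at hsum
    exact hsum.false
  have hkey : ∀ t > 0, ∑ j, p j * (c - h j) / (1 + h j * t) = 0 := fun t ht =>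
    sum_mul_sub_div_eq_zero_of_one_div_eq_sum hps ht.ne' (hct t ht) (hht t ht) (hconst t ht)
  have hmean : ∑ j, p j * (c - h j) = 0 := by
    simpa using sum_div_eq_zero_of_forall_pos _ _ _ (fun _ => one_ne_zero) hkey
  have hharm : ∑ j, p j * (c - h j) / h j = 0 := by
    refine sum_div_eq_zero_of_forall_pos _ _ (fun _ => 1) (fun j => (hh j).ne') fun s hs => ?_
    have := hkey s⁻¹ (inv_pos.mpr hs)
    simp only [div_one_add_mul_inv _ _ hs.ne', ← mul_sum, mul_eq_zero, hs.ne', false_or] at this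
    simpa only [one_mul] using this
  exact eq_of_sum_mul_sub_eq_zero_of_sum_mul_sub_div_eq_zero hp hh hmean hharm i
end

section
/- Let p₁,…,pₙ > 0 with Σ pᵢ = 1 and h₁,…,hₙ > 0, not all hᵢ equal. Define D(t) = Σᵢ pᵢ/(1+hᵢt) and h(t) = (1/D(t)−1)/t. Then for all t > 0, h(t) > H where H = (Σᵢ pᵢ/hᵢ)⁻¹ is the weighted harmonic mean. -/
/-!
With `uᵢ = 1 / hᵢ` each term of `D(t)` is `pᵢ φ(uᵢ)` for `φ(u) = u / (u + t)`, which is strictly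
concave. Jensen's inequality gives `D(t) < φ(U)` with `U = ∑ pᵢ uᵢ = 1 / H`, strictly because the
`uᵢ` are not all equal, and `1 / D(t) > 1 / φ(U) = 1 + H t` rearranges to `h(t) > H`.
-/

open Finset Set

lemma strictConcaveOn_div_add_const {t : ℝ} (ht : 0 < t) :
    StrictConcaveOn ℝ (Ioi (-t)) fun u : ℝ => u / (u + t) := by
  refine ⟨convex_Ioi _, fun x hx y hy hxy a b ha hb hab => ?_⟩
  obtain rfl : b = 1 - a := by linarith
  rw [Set.mem_Ioi] at hx hy
  have hxt : 0 < x + t := by linarith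
  have hyt : 0 < y + t := by linarith
  have hmix : 0 < a * x + (1 - a) * y + t := by nlinarith
  have hxy' : 0 < (x - y) ^ 2 := by positivity [sub_ne_zero.2 hxy]
  simp only [smul_eq_mul]
  rw [← mul_div_assoc, ← mul_div_assoc, div_add_div _ _ hxt.ne' hyt.ne',
    div_lt_div_iff₀ (by positivity) hmix]
  have gap : (a * x + (1 - a) * y) * ((x + t) * (y + t)) -
      (a * x * (y + t) + (x + t) * ((1 - a) * y)) * (a * x + (1 - a) * y + t)
      = t * (a * (1 - a) * (x - y) ^ 2) := by ring
  nlinarith [mul_pos ht (mul_pos (mul_pos ha hb) hxy')]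

lemma sum_div_one_add_mul_lt {ι : Type*} {s : Finset ι} {p h : ι → ℝ}
    (hp : ∀ i ∈ s, 0 < p i) (hps : ∑ i ∈ s, p i = 1) (hh : ∀ i ∈ s, 0 < h i)
    (hne : ∃ i ∈ s, ∃ j ∈ s, h i ≠ h j) {t : ℝ} (ht : 0 < t) :
    ∑ i ∈ s, p i / (1 + h i * t) < (∑ i ∈ s, p i / h i) / (∑ i ∈ s, p i / h i + t) := by
  have jensen := (strictConcaveOn_div_add_const ht).lt_map_sum (p := fun i => (h i)⁻¹) hp hps
    (fun i hi => (neg_neg_of_pos ht).trans (inv_pos.2 (hh i hi)))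
    (by obtain ⟨i, hi, j, hj, hij⟩ := hne; exact ⟨i, hi, j, hj, inv_injective.ne hij⟩)
  have hterm : ∀ i ∈ s, p i • ((h i)⁻¹ / ((h i)⁻¹ + t)) = p i / (1 + h i * t) := by
    intro i hi
    have := (hh i hi).ne'
    rw [smul_eq_mul]
    field_simp
  rw [← sum_congr rfl hterm]
  simpa only [smul_eq_mul, div_eq_mul_inv] using jensen

theorem stmt_18 (n : ℕ) (p h : Fin n → ℝ)
    (hp : ∀ i, 0 < p i) (hps : ∑ i, p i = 1) (hh : ∀ i, 0 < h i)
    (hne : ∃ i j, h i ≠ h j) :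
    ∀ t : ℝ, 0 < t →
      (1 / (∑ i, p i / (1 + h i * t)) - 1) / t > (∑ i, p i / h i)⁻¹ := by
  intro t ht
  obtain ⟨i₀, j₀, hij⟩ := hne
  set D := ∑ i, p i / (1 + h i * t)
  set U := ∑ i, p i / h i
  have hD : D < U / (U + t) := sum_div_one_add_mul_lt (fun i _ => hp i) hps (fun i _ => hh i)
    ⟨i₀, mem_univ _, j₀, mem_univ _, hij⟩ ht
  have hU : 0 < U := sum_pos (fun i _ => div_pos (hp i) (hh i)) ⟨i₀, mem_univ _⟩
  have hDpos : 0 < D := sum_pos (fun i _ => div_pos (hp i) (by nlinarith [hh i])) ⟨i₀, mem_univ _⟩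
  have hinv : 1 + U⁻¹ * t < 1 / D := by
    calc 1 + U⁻¹ * t = 1 / (U / (U + t)) := by field_simp
      _ < 1 / D := one_div_lt_one_div_of_lt hDpos hD
  rw [gt_iff_lt, lt_div_iff₀ ht]
  linarith
end
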